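/- arXiv:1405.0143 — 2 statements merged into one kernel-verified Lean document; each statement's English description precedes it below -/
import Mathlib

section
/- There do not exist integers b1, b2, b3, a sign ε ∈ {1, -1}, and δ ∈ {0, 1} such that m4 = b1·b2 + ε·b3·(b3 + δ) and m2 = b1 + b2 - ε·δ, whenever m4 ≡ 3 (mod 8) and m2 ≡ 2 (mod 4). -/
/-!
If `δ = 1`, the condition on `m2` makes `b1 + b2` odd, so `b1 * b2` is even; as `b3 * (b3 + 1)` is
even too, `m4` would be even. If `δ = 0`, then `b1 + b2 ≡ 2 (mod 4)`, which forces
`b1 * b2 ≡ 0 (mod 8)` or `b1 * b2 ≡ 1 (mod 4)`; since squares are `0, 1, 4 (mod 8)`, the number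
`b1 * b2 ± b3 ^ 2` is then never `3 (mod 8)`.
-/

theorem Int.sq_emod_eight (n : ℤ) : n ^ 2 % 8 = 0 ∨ n ^ 2 % 8 = 1 ∨ n ^ 2 % 8 = 4 := by
  have h : n ^ 2 % 8 = (n % 8) * (n % 8) % 8 := by rw [sq, Int.mul_emod]
  have : 0 ≤ n % 8 := Int.emod_nonneg n (by norm_num)
  have : n % 8 < 8 := Int.emod_lt_of_pos n (by norm_num)
  interval_cases n % 8 <;> omega

theorem Int.mul_emod_of_add_emod_four_eq_two {a b : ℤ} (h : (a + b) % 4 = 2) :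
    a * b % 8 = 0 ∨ a * b % 4 = 1 := by
  have hab : a * b % 8 = (a % 8) * (b % 8) % 8 := Int.mul_emod a b 8
  have : 0 ≤ a % 8 := Int.emod_nonneg a (by norm_num)
  have : a % 8 < 8 := Int.emod_lt_of_pos a (by norm_num)
  have : 0 ≤ b % 8 := Int.emod_nonneg b (by norm_num)
  have : b % 8 < 8 := Int.emod_lt_of_pos b (by norm_num)
  interval_cases ha : a % 8 <;> interval_cases hb : b % 8 <;> omega

theorem Int.mul_add_sq_emod_eight_ne_three {a b c s : ℤ} (h : (a + b) % 4 = 2)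
    (hs : s = 1 ∨ s = -1) : (a * b + s * c ^ 2) % 8 ≠ 3 := by
  have hsq := Int.sq_emod_eight c
  have hab := Int.mul_emod_of_add_emod_four_eq_two h
  rcases hs with rfl | rfl <;> omega

theorem Int.even_mul_of_odd_add {a b : ℤ} (h : Odd (a + b)) : Even (a * b) := by
  rcases Int.even_or_odd a with ha | ha
  · exact ha.mul_right b
  · exact (Int.odd_add.mp h |>.mp ha).mul_left a

theorem stmt_0 (m4 m2 : ℤ) (h4 : m4 % 8 = 3) (h2 : m2 % 4 = 2) :
    ¬ ∃ (b1 b2 b3 ε δ : ℤ), (ε = 1 ∨ ε = -1) ∧ (δ = 0 ∨ δ = 1) ∧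
      m4 = b1 * b2 + ε * b3 * (b3 + δ) ∧ m2 = b1 + b2 - ε * δ := by
  rintro ⟨b1, b2, b3, ε, δ, hε, rfl | rfl, e4, e2⟩
  · have hsum : (b1 + b2) % 4 = 2 := by omega
    have hm4 : m4 = b1 * b2 + ε * b3 ^ 2 := by rw [e4]; ring
    exact Int.mul_add_sq_emod_eight_ne_three hsum hε (hm4 ▸ h4)
  · have hsum : Odd (b1 + b2) := by
      rw [Int.odd_iff]
      rcases hε with rfl | rfl <;> omega
    have hm4 : Even m4 := by
      rw [e4, mul_assoc]
      exact (Int.even_mul_of_odd_add hsum).add ((Int.even_mul_succ_self b3).mul_left ε)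
    rw [Int.even_iff] at hm4
    omega
end

section
/- For integers n, p, q: if p·q = -(4n+1) and p + q = 2n, then n = 0 or n = -4. -/
theorem Int.add_eq_prime_add_one_or_neg_of_mul_eq_prime {a b : ℤ} {p : ℕ} (hp : p.Prime)
    (h : a * b = p) : a + b = p + 1 ∨ a + b = -(p + 1) := by
  have habs : a.natAbs * b.natAbs = p := by rw [← Int.natAbs_mul, h, Int.natAbs_natCast]
  rcases Nat.prime_mul_iff.mp (habs ▸ hp) with ⟨-, hb⟩ | ⟨-, ha⟩
  · rw [hb, mul_one] at habs
    rcases Int.natAbs_eq_iff.mp habs with rfl | rfl <;>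
      rcases Int.natAbs_eq_iff.mp hb with rfl | rfl <;> grind
  · rw [ha, one_mul] at habs
    rcases Int.natAbs_eq_iff.mp ha with rfl | rfl <;>
      rcases Int.natAbs_eq_iff.mp habs with rfl | rfl <;> grind

theorem stmt_4 (n p q : ℤ) (hpq : p * q = -(4 * n + 1)) (hsum : p + q = 2 * n) :
    n = 0 ∨ n = -4 := by
  have hshift : (p + 2) * (q + 2) = (3 : ℕ) := by
    push_cast
    linear_combination hpq + 2 * hsum
  rcases Int.add_eq_prime_add_one_or_neg_of_mul_eq_prime Nat.prime_three hshift with h | h <;>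
    push_cast at h <;> omega
end
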